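/- Let M, N₁, N₂ ∈ ℕ₀ and L ∈ {0, 1, …, M}. Let ψ₁ : ℝ → ℂ be compactly supported and N₁-times continuously differentiable with M vanishing moments (∫ x^k ψ₁(x) dx = 0 for k = 0, …, M−1), and let ψ₂ : ℝ → ℂ be compactly supported and (N₁+N₂)-times continuously differentiable. Set ψ(x₁, x₂) := ψ₁(x₁)ψ₂(x₂). Then there exists a constant C > 0 such that for every multi-index ρ with |ρ| ≤ L and every ξ ∈ ℝ²: |∂^ρ ψ̂(ξ)| ≤ C · min{1, |ξ₁|}^{M−L} · ⟨|ξ|⟩^{−N₁} · ⟨ξ₂⟩^{−N₂}. -/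

import Mathlib

open MeasureTheory Real Set
open scoped ENNReal NNReal

noncomputable section

namespace AlphaMolecules

/-- the analyst's bracket `⟨x⟩ = (1+x²)^{1/2}` -/
def brak (x : ℝ) : ℝ := Real.sqrt (1 + x ^ 2)

/-- the Euclidean norm on `ℝ × ℝ` -/
def nrm (ξ : ℝ × ℝ) : ℝ := Real.sqrt (ξ.1 ^ 2 + ξ.2 ^ 2)

/-- rotation `R_θ` by the angle `θ` -/
def rot (θ : ℝ) (v : ℝ × ℝ) : ℝ × ℝ :=
  (Real.cos θ * v.1 - Real.sin θ * v.2, Real.sin θ * v.1 + Real.cos θ * v.2)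

/-- the α-scaling matrix `A_{α,s} = diag(s, s^α)` acting on `ℝ × ℝ` -/
def ascale (α s : ℝ) (v : ℝ × ℝ) : ℝ × ℝ := (s * v.1, s ^ α * v.2)

/-- the 2-dimensional Fourier transform `ĝ(ξ) = ∫ g(x) e^{-2πi x·ξ} dx` -/
def ft2 (g : ℝ × ℝ → ℂ) (ξ : ℝ × ℝ) : ℂ :=
  ∫ x : ℝ × ℝ, Complex.exp (-2 * Real.pi * Complex.I * (x.1 * ξ.1 + x.2 * ξ.2)) * g x

/-- partial derivative in the first coordinate -/
def pd1 (f : ℝ × ℝ → ℂ) : ℝ × ℝ → ℂ := fun x => fderiv ℝ f x (1, 0)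

/-- partial derivative in the second coordinate -/
def pd2 (f : ℝ × ℝ → ℂ) : ℝ × ℝ → ℂ := fun x => fderiv ℝ f x (0, 1)

/-- the iterated partial derivative `∂^ρ` for a multi-index `ρ = (ρ₁, ρ₂)` -/
def pd (ρ : ℕ × ℕ) (f : ℝ × ℝ → ℂ) : ℝ × ℝ → ℂ := pd1^[ρ.1] (pd2^[ρ.2] f)

/-- `g` satisfies the α-molecule condition at scale `s` with constant `C`
and order `(L, M, N₁, N₂)`. -/
def MoleculeCond (α s C : ℝ) (L : ℕ) (M N₁ N₂ : ℝ) (g : ℝ × ℝ → ℂ) : Prop :=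
  ContDiff ℝ L (ft2 g) ∧
  ∀ ρ : ℕ × ℕ, ρ.1 + ρ.2 ≤ L → ∀ ξ : ℝ × ℝ,
    ‖pd ρ (ft2 g) ξ‖ ≤
      C * (min 1 (s⁻¹ + |ξ.1| + s ^ (-(1 - α)) * |ξ.2|)) ^ M
        * brak (nrm ξ) ^ (-N₁) * brak ξ.2 ^ (-N₂)

/-- the α-molecule `m(x) = s^{(1+α)/2} g(A_{α,s} R_θ (x - x₀))` -/
def mol (α s θ : ℝ) (x₀ : ℝ × ℝ) (g : ℝ × ℝ → ℂ) : ℝ × ℝ → ℂ :=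
  fun x => ((s ^ ((1 + α) / 2) : ℝ) : ℂ) * g (ascale α s (rot θ (x - x₀)))

/-- distance between two angles modulo `π` -/
def angDist (a b : ℝ) : ℝ := ⨅ n : ℤ, |a - b + n * Real.pi|

/-- the quantity `d_α` between two points of the parameter space `ℙ = ℝ₊ × 𝕋 × ℝ²` -/
def dAlpha (α : ℝ) (p q : ℝ × ℝ × (ℝ × ℝ)) : ℝ :=
  (min p.1 q.1) ^ (2 * (1 - α)) * angDist p.2.1 q.2.1 ^ 2
    + (min p.1 q.1) ^ (2 * α) * ((p.2.2.1 - q.2.2.1) ^ 2 + (p.2.2.2 - q.2.2.2) ^ 2)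
    + (min p.1 q.1) ^ (2 : ℝ)
        / (1 + (min p.1 q.1) ^ (2 * (1 - α)) * angDist p.2.1 q.2.1 ^ 2)
        * (Real.cos p.2.1 * (p.2.2.1 - q.2.2.1) - Real.sin p.2.1 * (p.2.2.2 - q.2.2.2)) ^ 2

/-- the α-scaled index distance `ω_α` -/
def omegaAlpha (α : ℝ) (p q : ℝ × ℝ × (ℝ × ℝ)) : ℝ :=
  max (p.1 / q.1) (q.1 / p.1) * (1 + dAlpha α p q)

/-- the `L²(ℝ²)` inner product `⟨f, g⟩ = ∫ f ḡ` -/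
def innerL2 (f g : ℝ × ℝ → ℂ) : ℂ := ∫ x : ℝ × ℝ, f x * (starRingEnd ℂ) (g x)

end AlphaMolecules

open AlphaMolecules

/-!
The Fourier transform of `ψ₁ ⊗ ψ₂` is `𝓕ψ₁(ξ₁) 𝓕ψ₂(ξ₂)`, so `∂^ρ` acts on each factor separately.
For a compactly supported `C^N` function `ψ`, every derivative of `𝓕ψ` decays like `⟨ξ⟩^{-N}`,
being the transform of the compactly supported `C^N` function `(-2πix)^j ψ(x)`. The moments of `ψ₁`
are, up to constants, the derivatives of `𝓕ψ₁` at `0`; as the first `M` of them vanish, the mean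
value theorem applied `M - j` times gives `|∂^j 𝓕ψ₁(ξ₁)| ≲ |ξ₁|^{M-j}` for `|ξ₁| ≤ 1`. Finally
`⟨|ξ|⟩ ≤ ⟨ξ₁⟩⟨ξ₂⟩`, so `N₁` of the `N₁ + N₂` orders of decay of `𝓕ψ₂` combine with the decay of
`𝓕ψ₁` into `⟨|ξ|⟩^{-N₁}`.
-/

open Complex (I)
open FourierTransform
open scoped ContDiff

lemma Set.Finite.exists_pos_forall_le_mul {ι α : Type*} {s : Set ι} (hs : s.Finite)
    {f : ι → α → ℝ} {g : α → ℝ} (hg : ∀ x, 0 ≤ g x) (h : ∀ i ∈ s, ∃ C, ∀ x, f i x ≤ C * g x) :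
    ∃ C > 0, ∀ i ∈ s, ∀ x, f i x ≤ C * g x := by
  choose! C hC using h
  obtain ⟨B, hB⟩ := (hs.image C).bddAbove
  refine ⟨max B 1, by positivity, fun i hi x => (hC i hi x).trans ?_⟩
  exact mul_le_mul_of_nonneg_right ((hB (mem_image_of_mem C hi)).trans (le_max_left _ _)) (hg x)

lemma Real.fourier_eq_integral_exp_mul (f : ℝ → ℂ) (w : ℝ) :
    𝓕 f w = ∫ v : ℝ, Complex.exp (-2 * π * I * (v * w)) * f v := by
  simp only [Real.fourier_real_eq_integral_exp_smul, smul_eq_mul]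
  congr 1 with v
  push_cast
  ring_nf

lemma integrable_pow_mul_norm_iteratedFDeriv_of_hasCompactSupport {E : Type*}
    [NormedAddCommGroup E] [NormedSpace ℝ E] {f : ℝ → E} {N : ℕ}
    (hsupp : HasCompactSupport f) (hf : ContDiff ℝ N f) {n : ℕ} (hn : n ≤ N) (k : ℕ) :
    Integrable (fun v : ℝ => ‖v‖ ^ k * ‖iteratedFDeriv ℝ n f v‖) :=
  ((continuous_norm.pow k).mul (hf.continuous_iteratedFDeriv (by exact_mod_cast hn)).norm)
    |>.integrable_of_hasCompactSupport (hsupp.iteratedFDeriv n).norm.mul_left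

lemma contDiff_fourier_of_hasCompactSupport {E : Type*} [NormedAddCommGroup E]
    [NormedSpace ℂ E] {f : ℝ → E} (hsupp : HasCompactSupport f)
    (hf : Continuous f) : ContDiff ℝ ∞ (𝓕 f) :=
  Real.contDiff_fourier fun n _ =>
    ((continuous_norm.pow n).mul hf.norm).integrable_of_hasCompactSupport hsupp.norm.mul_left

lemma iteratedDeriv_fourier_zero_eq_zero {ψ : ℝ → ℂ} (hsupp : HasCompactSupport ψ)
    (hψ : Continuous ψ) {k : ℕ} (hk : ∫ x : ℝ, (x : ℂ) ^ k * ψ x = 0) :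
    iteratedDeriv k (𝓕 ψ) 0 = 0 := by
  have hint (n : ℕ) (_ : (n : ℕ∞) ≤ k) : Integrable (fun x : ℝ => x ^ n • ψ x) :=
    ((continuous_pow n).smul hψ).integrable_of_hasCompactSupport hsupp.smul_left
  rw [Real.iteratedDeriv_fourier hint le_rfl, Real.fourier_real_eq]
  calc _ = (-2 * π * I) ^ k * ∫ x : ℝ, (x : ℂ) ^ k * ψ x := by
        rw [← integral_const_mul]
        congr 1 with x
        simp only [mul_zero, neg_zero, AddChar.map_zero_eq_one, one_smul, smul_eq_mul]
        ring
    _ = 0 := by rw [hk, mul_zero]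

lemma norm_iteratedDeriv_le_of_iteratedDeriv_zero {E : Type*} [NormedAddCommGroup E]
    [NormedSpace ℝ E] {F : ℝ → E} (hF : ContDiff ℝ ∞ F) {M : ℕ}
    (hvan : ∀ k < M, iteratedDeriv k F 0 = 0) (j : ℕ) :
    ∃ C, ∀ ξ : ℝ, |ξ| ≤ 1 → ‖iteratedDeriv j F ξ‖ ≤ C * |ξ| ^ (M - j) := by
  suffices h : ∀ m j, m ≤ M - j → ∃ C ≥ 0, ∀ ξ : ℝ, |ξ| ≤ 1 → ‖iteratedDeriv j F ξ‖ ≤ C * |ξ| ^ m by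
    obtain ⟨C, -, hC⟩ := h (M - j) j le_rfl
    exact ⟨C, hC⟩
  intro m
  induction m with
  | zero =>
    intro j _
    obtain ⟨C, hC⟩ := isCompact_Icc.exists_bound_of_continuousOn
      (hF.continuous_iteratedDeriv j (mod_cast le_top)).continuousOn
    refine ⟨max C 0, le_max_right _ _, fun ξ hξ => ?_⟩
    rw [pow_zero, mul_one]
    exact (hC ξ (abs_le.1 hξ)).trans (le_max_left _ _)
  | succ m ih =>
    intro j hm
    obtain ⟨C, hC, hbound⟩ := ih (j + 1) (by omega)
    refine ⟨C, hC, fun ξ hξ => ?_⟩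
    have hmvt := (convex_closedBall (0 : ℝ) |ξ|).norm_image_sub_le_of_norm_deriv_le
      (C := C * |ξ| ^ m) (fun t _ => hF.differentiable_iteratedDeriv j
        (mod_cast ENat.natCast_lt_top j) t) (fun t ht => ?_) (Metric.mem_closedBall_self (abs_nonneg ξ))
      (by simp : ξ ∈ Metric.closedBall 0 |ξ|)
    · rw [hvan j (by omega), sub_zero, sub_zero, Real.norm_eq_abs] at hmvt
      rwa [pow_succ, ← mul_assoc]
    · have ht' : |t| ≤ |ξ| := by simpa using ht
      rw [← iteratedDeriv_succ]
      exact (hbound t (ht'.trans hξ)).trans (by gcongr)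

namespace AlphaMolecules

lemma brak_pos (x : ℝ) : 0 < brak x :=
  Real.sqrt_pos.2 (by positivity)

lemma brak_le_one_add_abs (x : ℝ) : brak x ≤ 1 + |x| := by
  simpa [brak, Real.norm_eq_abs, sq_abs] using sqrt_one_add_norm_sq_le x

lemma brak_rpow_neg_natCast (x : ℝ) (N : ℕ) : brak x ^ (-(N : ℝ)) = (brak x ^ N)⁻¹ := by
  rw [Real.rpow_neg (brak_pos x).le, Real.rpow_natCast]

lemma brak_pow_le (x : ℝ) (N : ℕ) : brak x ^ N ≤ 2 ^ N * (1 + |x| ^ N) := by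
  rcases le_total |x| 1 with hx | hx
  · calc brak x ^ N ≤ 2 ^ N := by
          gcongr
          · exact (brak_pos x).le
          · linarith [brak_le_one_add_abs x]
      _ ≤ 2 ^ N * (1 + |x| ^ N) := le_mul_of_one_le_right (by positivity) (by simp)
  · calc brak x ^ N ≤ (2 * |x|) ^ N := by
          gcongr
          · exact (brak_pos x).le
          · linarith [brak_le_one_add_abs x]
      _ ≤ 2 ^ N * (1 + |x| ^ N) := by rw [mul_pow]; gcongr; linarith

lemma brak_nrm_le_mul (ξ : ℝ × ℝ) : brak (nrm ξ) ≤ brak ξ.1 * brak ξ.2 := by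
  rw [brak, brak, brak, nrm, Real.sq_sqrt (by positivity), ← Real.sqrt_mul (by positivity)]
  exact Real.sqrt_le_sqrt (by nlinarith [sq_nonneg (ξ.1 * ξ.2)])

lemma norm_iteratedDeriv_fourier_le_of_hasCompactSupport {E : Type*} [NormedAddCommGroup E]
    [NormedSpace ℂ E] {f : ℝ → E} {N : ℕ}
    (hsupp : HasCompactSupport f) (hf : ContDiff ℝ N f) (k : ℕ) :
    ∃ C ≥ 0, ∀ w, ‖iteratedDeriv k (𝓕 f) w‖ ≤ C * brak w ^ (-(N : ℝ)) := by
  have hbound (n : ℕ) (hn : n ≤ N) : ∃ B, ∀ w : ℝ, |w| ^ n * ‖iteratedDeriv k (𝓕 f) w‖ ≤ B := by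
    have h (w : ℝ) := Real.pow_mul_norm_iteratedFDeriv_fourier_le (K := k) (N := N) hf
      (fun k' n' _ hn' => integrable_pow_mul_norm_iteratedFDeriv_of_hasCompactSupport hsupp hf
        (by exact_mod_cast hn') k') le_rfl (by exact_mod_cast hn) w
    simp only [Real.norm_eq_abs, norm_iteratedFDeriv_eq_norm_iteratedDeriv] at h
    exact ⟨_, h⟩
  obtain ⟨B₀, hB₀⟩ := hbound 0 (Nat.zero_le N)
  obtain ⟨B, hB⟩ := hbound N le_rfl
  have hB₀_nonneg : 0 ≤ B₀ := (mul_nonneg (by positivity) (norm_nonneg _)).trans (hB₀ 0)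
  have hB_nonneg : 0 ≤ B := (mul_nonneg (by positivity) (norm_nonneg _)).trans (hB 0)
  refine ⟨2 ^ N * (B₀ + B), by positivity, fun w => ?_⟩
  rw [brak_rpow_neg_natCast, ← div_eq_mul_inv, le_div_iff₀ (pow_pos (brak_pos w) N)]
  calc ‖iteratedDeriv k (𝓕 f) w‖ * brak w ^ N
      ≤ ‖iteratedDeriv k (𝓕 f) w‖ * (2 ^ N * (1 + |w| ^ N)) := by gcongr; exact brak_pow_le w N
    _ = 2 ^ N * (|w| ^ 0 * ‖iteratedDeriv k (𝓕 f) w‖ + |w| ^ N * ‖iteratedDeriv k (𝓕 f) w‖) := by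
        ring
    _ ≤ 2 ^ N * (B₀ + B) := by gcongr; exacts [hB₀ w, hB w]

lemma norm_le_min_pow_mul_brak_rpow {E : Type*} [NormedAddCommGroup E] {g : ℝ → E} {A B : ℝ}
    {m N : ℕ} (hA : ∀ ξ, ‖g ξ‖ ≤ A * brak ξ ^ (-(N : ℝ)))
    (hB : ∀ ξ, |ξ| ≤ 1 → ‖g ξ‖ ≤ B * |ξ| ^ m) (ξ : ℝ) :
    ‖g ξ‖ ≤ max A (2 ^ N * B) * min 1 |ξ| ^ m * brak ξ ^ (-(N : ℝ)) := by
  have hbrak : 0 ≤ brak ξ ^ (-(N : ℝ)) := Real.rpow_nonneg (brak_pos ξ).le _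
  rcases le_total 1 |ξ| with hξ | hξ
  · rw [min_eq_left hξ, one_pow, mul_one]
    exact (hA ξ).trans (by gcongr; exact le_max_left _ _)
  · rw [min_eq_right hξ]
    have hbrak_le : brak ξ ^ N ≤ 2 ^ N := by
      gcongr
      · exact (brak_pos ξ).le
      · linarith [brak_le_one_add_abs ξ]
    have hone : 1 ≤ 2 ^ N * brak ξ ^ (-(N : ℝ)) := by
      rw [brak_rpow_neg_natCast, ← div_eq_mul_inv, one_le_div (pow_pos (brak_pos ξ) N)]
      exact hbrak_le
    calc ‖g ξ‖ ≤ B * |ξ| ^ m := hB ξ hξ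
      _ ≤ B * |ξ| ^ m * (2 ^ N * brak ξ ^ (-(N : ℝ))) :=
          le_mul_of_one_le_right ((norm_nonneg _).trans (hB ξ hξ)) hone
      _ = 2 ^ N * B * |ξ| ^ m * brak ξ ^ (-(N : ℝ)) := by ring
      _ ≤ max A (2 ^ N * B) * |ξ| ^ m * brak ξ ^ (-(N : ℝ)) := by
          gcongr; exact le_max_right _ _

lemma norm_iteratedDeriv_fourier_le_of_moments {ψ : ℝ → ℂ} {M N : ℕ}
    (hsupp : HasCompactSupport ψ) (hψ : ContDiff ℝ N ψ)
    (hmom : ∀ k < M, ∫ x : ℝ, (x : ℂ) ^ k * ψ x = 0) (j : ℕ) :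
    ∃ C ≥ 0, ∀ ξ, ‖iteratedDeriv j (𝓕 ψ) ξ‖ ≤ C * min 1 |ξ| ^ (M - j) * brak ξ ^ (-(N : ℝ)) := by
  obtain ⟨A, hA, hdecay⟩ := norm_iteratedDeriv_fourier_le_of_hasCompactSupport hsupp hψ j
  obtain ⟨B, hB⟩ := norm_iteratedDeriv_le_of_iteratedDeriv_zero
    (contDiff_fourier_of_hasCompactSupport hsupp hψ.continuous)
    (fun k hk => iteratedDeriv_fourier_zero_eq_zero hsupp hψ.continuous (hmom k hk)) j
  exact ⟨_, hA.trans (le_max_left _ _), norm_le_min_pow_mul_brak_rpow hdecay hB⟩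

lemma ft2_mul (ψ₁ ψ₂ : ℝ → ℂ) :
    ft2 (fun x => ψ₁ x.1 * ψ₂ x.2) = fun ξ => 𝓕 ψ₁ ξ.1 * 𝓕 ψ₂ ξ.2 := by
  ext ξ
  rw [Real.fourier_eq_integral_exp_mul, Real.fourier_eq_integral_exp_mul, ft2,
    ← integral_prod_mul, ← Measure.volume_eq_prod]
  congr 1 with x
  rw [mul_add, Complex.exp_add]
  ring

lemma hasFDerivAt_mul_prod {F G : ℝ → ℂ} {ξ : ℝ × ℝ} (hF : DifferentiableAt ℝ F ξ.1)
    (hG : DifferentiableAt ℝ G ξ.2) :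
    HasFDerivAt (fun x : ℝ × ℝ => F x.1 * G x.2)
      (F ξ.1 • (ContinuousLinearMap.toSpanSingleton ℝ (deriv G ξ.2)).comp (.snd ℝ ℝ ℝ)
        + G ξ.2 • (ContinuousLinearMap.toSpanSingleton ℝ (deriv F ξ.1)).comp (.fst ℝ ℝ ℝ)) ξ :=
  (hF.hasDerivAt.hasFDerivAt.comp ξ hasFDerivAt_fst).mul
    (hG.hasDerivAt.hasFDerivAt.comp ξ hasFDerivAt_snd)

lemma pd1_mul {F G : ℝ → ℂ} (hF : Differentiable ℝ F) (hG : Differentiable ℝ G) :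
    pd1 (fun ξ => F ξ.1 * G ξ.2) = fun ξ => deriv F ξ.1 * G ξ.2 := by
  ext ξ
  simp [pd1, (hasFDerivAt_mul_prod (hF ξ.1) (hG ξ.2)).fderiv, mul_comm]

lemma pd2_mul {F G : ℝ → ℂ} (hF : Differentiable ℝ F) (hG : Differentiable ℝ G) :
    pd2 (fun ξ => F ξ.1 * G ξ.2) = fun ξ => F ξ.1 * deriv G ξ.2 := by
  ext ξ
  simp [pd2, (hasFDerivAt_mul_prod (hF ξ.1) (hG ξ.2)).fderiv]

lemma pd1_iterate_mul {F G : ℝ → ℂ} (hF : ContDiff ℝ ∞ F) (hG : Differentiable ℝ G) (j : ℕ) :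
    pd1^[j] (fun ξ => F ξ.1 * G ξ.2) = fun ξ => iteratedDeriv j F ξ.1 * G ξ.2 := by
  induction j with
  | zero => simp
  | succ j ih =>
    rw [Function.iterate_succ_apply', ih, iteratedDeriv_succ,
      pd1_mul (hF.differentiable_iteratedDeriv j (mod_cast ENat.natCast_lt_top j)) hG]

lemma pd2_iterate_mul {F G : ℝ → ℂ} (hF : Differentiable ℝ F) (hG : ContDiff ℝ ∞ G) (k : ℕ) :
    pd2^[k] (fun ξ => F ξ.1 * G ξ.2) = fun ξ => F ξ.1 * iteratedDeriv k G ξ.2 := by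
  induction k with
  | zero => simp
  | succ k ih =>
    rw [Function.iterate_succ_apply', ih, iteratedDeriv_succ,
      pd2_mul hF (hG.differentiable_iteratedDeriv k (mod_cast ENat.natCast_lt_top k))]

lemma pd_mul {F G : ℝ → ℂ} (hF : ContDiff ℝ ∞ F) (hG : ContDiff ℝ ∞ G) (ρ : ℕ × ℕ) :
    pd ρ (fun ξ => F ξ.1 * G ξ.2) = fun ξ => iteratedDeriv ρ.1 F ξ.1 * iteratedDeriv ρ.2 G ξ.2 := by
  rw [pd, pd2_iterate_mul (hF.differentiable (by simp)) hG,
    pd1_iterate_mul hF (hG.differentiable_iteratedDeriv ρ.2 (mod_cast ENat.natCast_lt_top ρ.2))]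

lemma norm_pd_ft2_mul_le {M N₁ N₂ L : ℕ} (hL : L ≤ M) {ψ₁ ψ₂ : ℝ → ℂ}
    (h₁supp : HasCompactSupport ψ₁) (h₁smooth : ContDiff ℝ N₁ ψ₁)
    (h₁mom : ∀ k < M, ∫ x : ℝ, (x : ℂ) ^ k * ψ₁ x = 0)
    (h₂supp : HasCompactSupport ψ₂) (h₂smooth : ContDiff ℝ (N₁ + N₂) ψ₂)
    {ρ : ℕ × ℕ} (hρ : ρ.1 ≤ L) :
    ∃ C, ∀ ξ : ℝ × ℝ, ‖pd ρ (ft2 (fun x => ψ₁ x.1 * ψ₂ x.2)) ξ‖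
      ≤ C * ((min 1 |ξ.1|) ^ ((M : ℝ) - (L : ℝ))
        * brak (nrm ξ) ^ (-(N₁ : ℝ)) * brak ξ.2 ^ (-(N₂ : ℝ))) := by
  obtain ⟨C₁, hC₁, h₁⟩ := norm_iteratedDeriv_fourier_le_of_moments h₁supp h₁smooth h₁mom ρ.1
  obtain ⟨C₂, hC₂, h₂⟩ := norm_iteratedDeriv_fourier_le_of_hasCompactSupport h₂supp h₂smooth ρ.2
  refine ⟨C₁ * C₂, fun ξ => ?_⟩
  rw [ft2_mul, pd_mul (contDiff_fourier_of_hasCompactSupport h₁supp h₁smooth.continuous)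
    (contDiff_fourier_of_hasCompactSupport h₂supp h₂smooth.continuous), norm_mul,
    ← Nat.cast_sub hL, Real.rpow_natCast]
  have hmin : min 1 |ξ.1| ^ (M - ρ.1) ≤ min 1 |ξ.1| ^ (M - L) :=
    pow_le_pow_of_le_one (by positivity) (min_le_left _ _) (by omega)
  have hbrak : brak ξ.1 ^ (-(N₁ : ℝ)) * brak ξ.2 ^ (-(N₁ : ℝ)) ≤ brak (nrm ξ) ^ (-(N₁ : ℝ)) := by
    rw [← Real.mul_rpow (brak_pos _).le (brak_pos _).le]
    exact Real.rpow_le_rpow_of_nonpos (brak_pos _) (brak_nrm_le_mul ξ) (by simp)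
  have h₂' := h₂ ξ.2
  rw [Nat.cast_add, neg_add, Real.rpow_add (brak_pos _)] at h₂'
  calc _ ≤ (C₁ * min 1 |ξ.1| ^ (M - ρ.1) * brak ξ.1 ^ (-(N₁ : ℝ)))
        * (C₂ * (brak ξ.2 ^ (-(N₁ : ℝ)) * brak ξ.2 ^ (-(N₂ : ℝ)))) :=
        mul_le_mul (h₁ ξ.1) h₂' (norm_nonneg _) ((norm_nonneg _).trans (h₁ ξ.1))
    _ = C₁ * C₂ * (min 1 |ξ.1| ^ (M - ρ.1)
        * (brak ξ.1 ^ (-(N₁ : ℝ)) * brak ξ.2 ^ (-(N₁ : ℝ))) * brak ξ.2 ^ (-(N₂ : ℝ))) := by ring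
    _ ≤ _ := by
        have := (brak_pos ξ.1).le
        have := (brak_pos ξ.2).le
        gcongr

end AlphaMolecules

/-- from the proof of Proposition 3.9(iii): for a separable generator
`ψ = ψ₁ ⊗ ψ₂` with `ψ₁ ∈ C₀^{N₁}` having `M` vanishing moments and `ψ₂ ∈ C₀^{N₁+N₂}`,
the Fourier transform satisfies
`|∂^ρ ψ̂(ξ)| ≤ C min{1,|ξ₁|}^{M−L} ⟨|ξ|⟩^{-N₁} ⟨ξ₂⟩^{-N₂}` for all `|ρ| ≤ L ≤ M`. -/
theorem stmt15 (M N₁ N₂ L : ℕ) (hL : L ≤ M)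
    (ψ₁ ψ₂ : ℝ → ℂ)
    (h₁supp : HasCompactSupport ψ₁) (h₁smooth : ContDiff ℝ N₁ ψ₁)
    (h₁mom : ∀ k : ℕ, k < M → (∫ x : ℝ, (x : ℂ) ^ k * ψ₁ x) = 0)
    (h₂supp : HasCompactSupport ψ₂) (h₂smooth : ContDiff ℝ (N₁ + N₂) ψ₂) :
    ∃ C > (0 : ℝ), ∀ ρ : ℕ × ℕ, ρ.1 + ρ.2 ≤ L → ∀ ξ : ℝ × ℝ,
      ‖pd ρ (ft2 (fun x => ψ₁ x.1 * ψ₂ x.2)) ξ‖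
        ≤ C * (min 1 |ξ.1|) ^ ((M : ℝ) - (L : ℝ))
            * brak (nrm ξ) ^ (-(N₁ : ℝ)) * brak ξ.2 ^ (-(N₂ : ℝ)) := by
  have hfinite : {ρ : ℕ × ℕ | ρ.1 + ρ.2 ≤ L}.Finite :=
    (Set.finite_Iic (L, L)).subset fun ρ hρ => ⟨by simp at hρ; omega, by simp at hρ; omega⟩
  have hnonneg (ξ : ℝ × ℝ) : 0 ≤ (min 1 |ξ.1|) ^ ((M : ℝ) - (L : ℝ))
      * brak (nrm ξ) ^ (-(N₁ : ℝ)) * brak ξ.2 ^ (-(N₂ : ℝ)) := by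
    have := brak_pos (nrm ξ)
    have := brak_pos ξ.2
    positivity
  obtain ⟨C, hC, hbound⟩ := hfinite.exists_pos_forall_le_mul hnonneg fun ρ hρ =>
    norm_pd_ft2_mul_le (ρ := ρ) hL h₁supp h₁smooth h₁mom h₂supp h₂smooth (by simp at hρ; omega)
  exact ⟨C, hC, fun ρ hρ ξ => (hbound ρ hρ ξ).trans_eq (by ring)⟩
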